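/- arXiv:2003.06511 — 6 statements merged into one kernel-verified Lean document; each statement's English description precedes it below -/
import Mathlib

section
/- For every nonempty finite set 𝒳, every θ ∈ (0,1/2), every r > 0 and all full-support probability distributions P1 ≠ P2 on 𝒳, the function G_min is strictly increasing on [0,(1−2θ)/2). Moreover G_min(0) = 0. -/
namespace StmtNS

variable {X : Type*} [Fintype X]

/-- `P` is a probability distribution on the finite set `X`. -/
def IsProbDist (P : X → ℝ) : Prop := (∀ x, 0 ≤ P x) ∧ (∑ x, P x) = 1

/-- Kullback–Leibler divergence `D(P‖Q) = ∑_{x : P(x) > 0} P(x) log (P(x)/Q(x))`. -/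
noncomputable def KL (P Q : X → ℝ) : ℝ :=
  ∑ x, if 0 < P x then P x * Real.log (P x / Q x) else 0

/-- Generalized Jensen–Shannon divergence. -/
noncomputable def GJS (Q Qt : X → ℝ) (a : ℝ) : ℝ :=
  a * KL Q (fun x => (a * Q x + Qt x) / (a + 1)) +
    KL Qt (fun x => (a * Q x + Qt x) / (a + 1))

/-- The function `G_min`. -/
noncomputable def Gmin (P1 P2 : X → ℝ) (r θ Δ : ℝ) : ℝ :=
  min (r * GJS (fun x => (Δ * P1 x + (1 - θ - Δ) * P2 x) / (1 - θ)) P2 ((1 - θ) / r))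
      (r * GJS (fun x => ((1 - θ - Δ) * P1 x + Δ * P2 x) / (1 - θ)) P1 ((1 - θ) / r))

/-! Each branch of `G_min` is `r · GJS(Q_t, A, a)` along the segment `Q_t = (1 - t) A + t B`,
`t = Δ / (1 - θ)`. Since the midpoint `(a Q + A) / (a + 1)` is affine in `Q`, joint convexity of the
Kullback–Leibler divergence (the log-sum inequality) makes `t ↦ GJS(Q_t, A, a)` convex. It vanishes
at `t = 0` and, by Gibbs' inequality, is positive for `t > 0`; a convex function that stays above
its value at the left endpoint is strictly increasing, and so is a minimum of two such functions. -/

open Real Set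

theorem convexOn_mul_log_div :
    ConvexOn ℝ (Ici 0 ×ˢ Ioi 0) fun z : ℝ × ℝ => z.1 * log (z.1 / z.2) := by
  refine ⟨(convex_Ici 0).prod (convex_Ioi 0), ?_⟩
  rintro ⟨p₁, q₁⟩ ⟨hp₁, hq₁⟩ ⟨p₂, q₂⟩ ⟨hp₂, hq₂⟩ s t hs ht hst
  simp only [mem_Ici, mem_Ioi] at hp₁ hq₁ hp₂ hq₂
  simp only [Prod.smul_mk, Prod.mk_add_mk, smul_eq_mul]
  set q := s * q₁ + t * q₂
  have hq : 0 < q := by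
    rcases hs.eq_or_lt with rfl | hs
    · simp only [zero_add] at hst; simp [q, hst, hq₂]
    · positivity
  -- convexity of `x log x` at the points `pᵢ / qᵢ`, with the weights `s q₁ / q` and `t q₂ / q`
  have key := convexOn_mul_log.2 (mem_Ici.2 (div_nonneg hp₁ hq₁.le))
    (mem_Ici.2 (div_nonneg hp₂ hq₂.le)) (by positivity : 0 ≤ s * q₁ / q)
    (by positivity : 0 ≤ t * q₂ / q) (by rw [← add_div]; exact div_self hq.ne')
  have hcombo : s * q₁ / q * (p₁ / q₁) + t * q₂ / q * (p₂ / q₂) = (s * p₁ + t * p₂) / q := by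
    field_simp
  simp only [smul_eq_mul, hcombo] at key
  have := mul_le_mul_of_nonneg_left key hq.le
  calc (s * p₁ + t * p₂) * log ((s * p₁ + t * p₂) / q)
      = q * ((s * p₁ + t * p₂) / q * log ((s * p₁ + t * p₂) / q)) := by field_simp
    _ ≤ _ := this
    _ = s * (p₁ * log (p₁ / q₁)) + t * (p₂ * log (p₂ / q₂)) := by field_simp

theorem KL_eq_sum {P : X → ℝ} (hP : 0 ≤ P) (Q : X → ℝ) :
    KL P Q = ∑ x, P x * log (P x / Q x) := by
  refine Finset.sum_congr rfl fun x _ => ?_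
  rcases (hP x).eq_or_lt with h | h
  · simp [← h]
  · exact if_pos h

theorem convexOn_KL :
    ConvexOn ℝ (Ici 0 ×ˢ univ.pi fun _ => Ioi 0) fun z : (X → ℝ) × (X → ℝ) => KL z.1 z.2 := by
  refine ⟨(convex_Ici 0).prod (convex_pi fun _ _ => convex_Ioi 0), ?_⟩
  rintro ⟨P₁, Q₁⟩ ⟨hP₁, hQ₁⟩ ⟨P₂, Q₂⟩ ⟨hP₂, hQ₂⟩ s t hs ht hst
  simp only [mem_Ici, mem_pi, mem_univ, mem_Ioi, forall_const] at hP₁ hQ₁ hP₂ hQ₂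
  simp only [Prod.smul_mk, Prod.mk_add_mk, smul_eq_mul]
  rw [KL_eq_sum hP₁, KL_eq_sum hP₂, KL_eq_sum (by positivity), Finset.mul_sum, Finset.mul_sum,
    ← Finset.sum_add_distrib]
  refine Finset.sum_le_sum fun x _ => ?_
  simpa using convexOn_mul_log_div.2 (x := (P₁ x, Q₁ x)) (y := (P₂ x, Q₂ x))
    ⟨hP₁ x, hQ₁ x⟩ ⟨hP₂ x, hQ₂ x⟩ hs ht hst

theorem convexOn_GJS_left {R : X → ℝ} (hR : ∀ x, 0 < R x) {a : ℝ} (ha : 0 ≤ a) :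
    ConvexOn ℝ (Ici 0) fun Q => GJS Q R a := by
  refine ⟨convex_Ici 0, ?_⟩
  intro Q₁ hQ₁ Q₂ hQ₂ s t hs ht hst
  set M : (X → ℝ) → X → ℝ := fun Q x => (a * Q x + R x) / (a + 1)
  have hM : ∀ Q, 0 ≤ Q → M Q ∈ univ.pi fun _ => Ioi 0 := fun Q hQ x _ => by
    have hQx : 0 ≤ Q x := hQ x
    have := hR x
    show 0 < (a * Q x + R x) / (a + 1); positivity
  have hMcombo : M (s • Q₁ + t • Q₂) = s • M Q₁ + t • M Q₂ := by
    funext x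
    simp only [M, Pi.add_apply, Pi.smul_apply, smul_eq_mul]
    field_simp
    linear_combination (-R x) * hst
  have hR' : R ∈ Ici 0 := fun x => (hR x).le
  have hKL₁ := convexOn_KL.2 (mk_mem_prod hQ₁ (hM Q₁ hQ₁)) (mk_mem_prod hQ₂ (hM Q₂ hQ₂)) hs ht hst
  have hKL₂ := convexOn_KL.2 (mk_mem_prod hR' (hM Q₁ hQ₁)) (mk_mem_prod hR' (hM Q₂ hQ₂)) hs ht hst
  simp only [Prod.smul_mk, Prod.mk_add_mk, ← hMcombo, ← add_smul, hst, one_smul, smul_eq_mul]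
    at hKL₁ hKL₂
  simp only [GJS, smul_eq_mul]
  nlinarith [mul_le_mul_of_nonneg_left hKL₁ ha]

open InformationTheory in
theorem KL_pos {P Q : X → ℝ} (hP : 0 ≤ P) (hQ : ∀ x, 0 < Q x) (hsum : ∑ x, P x = ∑ x, Q x)
    (hne : P ≠ Q) : 0 < KL P Q := by
  have hterm : ∀ x, P x * log (P x / Q x) = Q x * klFun (P x / Q x) + (P x - Q x) := fun x => by
    have := (hQ x).ne'
    rw [klFun_apply]; field_simp; ring
  have hKL : KL P Q = ∑ x, Q x * klFun (P x / Q x) := by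
    rw [KL_eq_sum hP, Finset.sum_congr rfl fun x _ => hterm x, Finset.sum_add_distrib,
      Finset.sum_sub_distrib, hsum, sub_self, add_zero]
  have hkl : ∀ x, 0 ≤ klFun (P x / Q x) := fun x => klFun_nonneg (div_nonneg (hP x) (hQ x).le)
  obtain ⟨x, hx⟩ := Function.ne_iff.1 hne
  rw [hKL]
  refine Finset.sum_pos' (fun x _ => mul_nonneg (hQ x).le (hkl x)) ⟨x, Finset.mem_univ x, ?_⟩
  refine mul_pos (hQ x) ((hkl x).lt_of_ne' fun h => hx ?_)
  rw [klFun_eq_zero_iff (div_nonneg (hP x) (hQ x).le), div_eq_one_iff_eq (hQ x).ne'] at h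
  exact h

theorem KL_self (P : X → ℝ) : KL P P = 0 := by
  simp [KL]

theorem GJS_self (Q : X → ℝ) {a : ℝ} (ha : a + 1 ≠ 0) : GJS Q Q a = 0 := by
  have hM : (fun x => (a * Q x + Q x) / (a + 1)) = Q := by
    funext x; field_simp
  simp [GJS, hM, KL_self]

theorem GJS_pos {Q R : X → ℝ} (hQ : 0 ≤ Q) (hR : ∀ x, 0 < R x) (hsum : ∑ x, Q x = ∑ x, R x)
    (hne : Q ≠ R) {a : ℝ} (ha : 0 < a) : 0 < GJS Q R a := by
  set M : X → ℝ := fun x => (a * Q x + R x) / (a + 1)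
  have hM : ∀ x, 0 < M x := fun x => by
    have hQx : 0 ≤ Q x := hQ x
    have := hR x
    show 0 < (a * Q x + R x) / (a + 1); positivity
  have hMsum : ∑ x, M x = ∑ x, R x := by
    simp only [M, ← Finset.sum_div, Finset.sum_add_distrib, ← Finset.mul_sum, hsum]
    field_simp
  have hQM : Q ≠ M := fun h => hne (by
    funext x
    have := congrFun h x
    simp only [M] at this
    field_simp at this
    linarith)
  have hRM : R ≠ M := fun h => hne (by
    funext x
    have := congrFun h x
    simp only [M] at this
    field_simp at this
    nlinarith)
  exact add_pos (mul_pos ha (KL_pos hQ hM (hsum.trans hMsum.symm) hQM))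
    (KL_pos (fun x => (hR x).le) hM hMsum.symm hRM)

theorem _root_.ConvexOn.strictMonoOn_of_isLeast {s : Set ℝ} {f : ℝ → ℝ} {a : ℝ}
    (hf : ConvexOn ℝ s f) (ha : IsLeast s a) (hlt : ∀ t ∈ s, a < t → f a < f t) :
    StrictMonoOn f s := by
  intro x hx y hy hxy
  rcases (ha.2 hx).eq_or_lt with rfl | hax
  · exact hlt y hy hxy
  · refine hf.lt_right_of_left_lt ha.1 hy ?_ (hlt x hx hax)
    rw [openSegment_eq_Ioo (hax.trans hxy)]
    exact ⟨hax, hxy⟩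

open AffineMap in
theorem strictMonoOn_GJS_lineMap {A B : X → ℝ} (hA : ∀ x, 0 < A x) (hB : 0 ≤ B)
    (hsum : ∑ x, A x = ∑ x, B x) (hne : A ≠ B) {a : ℝ} (ha : 0 < a) :
    StrictMonoOn (fun t : ℝ => GJS (lineMap A B t) A a) (Icc 0 1) := by
  have hmem : ∀ t ∈ Icc (0 : ℝ) 1, 0 ≤ lineMap A B t := fun t ht => by
    rw [lineMap_apply_module]
    exact add_nonneg (smul_nonneg (sub_nonneg.2 ht.2) fun x => (hA x).le) (smul_nonneg ht.1 hB)
  have hconv : ConvexOn ℝ (Icc 0 1) fun t : ℝ => GJS (lineMap A B t) A a :=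
    ((convexOn_GJS_left hA ha.le).comp_affineMap (lineMap A B)).subset hmem (convex_Icc 0 1)
  refine hconv.strictMonoOn_of_isLeast (isLeast_Icc zero_le_one) fun t ht ht0 => ?_
  rw [lineMap_apply_zero, GJS_self A (by positivity)]
  have hsum_t : ∑ x, lineMap A B t x = ∑ x, A x := by
    simp only [lineMap_apply_module, Pi.add_apply, Pi.smul_apply, smul_eq_mul,
      Finset.sum_add_distrib, ← Finset.mul_sum, ← hsum]
    ring
  have hne_t : lineMap A B t ≠ A := by
    rw [lineMap_apply_module', Ne, add_eq_right, smul_eq_zero, sub_eq_zero, not_or]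
    exact ⟨ht0.ne', hne.symm⟩
  exact GJS_pos (hmem t ht) hA hsum_t hne_t ha

open AffineMap in
theorem Gmin_eq_min_lineMap (P1 P2 : X → ℝ) {r θ : ℝ} (hθ : 1 - θ ≠ 0) (Δ : ℝ) :
    Gmin P1 P2 r θ Δ = min (r * GJS (lineMap P2 P1 (Δ / (1 - θ))) P2 ((1 - θ) / r))
      (r * GJS (lineMap P1 P2 (Δ / (1 - θ))) P1 ((1 - θ) / r)) := by
  unfold Gmin
  congr 3 <;> funext x <;>
    simp only [lineMap_apply_module, Pi.add_apply, Pi.smul_apply, smul_eq_mul]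
  · field_simp; ring
  · field_simp

open AffineMap in
theorem Gmin_strictMonoOn_and_zero_general
    (P1 P2 : X → ℝ) (hP1 : IsProbDist P1) (hP2 : IsProbDist P2)
    (hP1pos : ∀ x, 0 < P1 x) (hP2pos : ∀ x, 0 < P2 x) (hne : P1 ≠ P2)
    {r θ : ℝ} (hr : 0 < r) (hθ : θ ∈ Set.Ioo (0 : ℝ) (1 / 2)) :
    StrictMonoOn (Gmin P1 P2 r θ) (Set.Ico (0 : ℝ) ((1 - 2 * θ) / 2)) ∧
      Gmin P1 P2 r θ 0 = 0 := by
  obtain ⟨-, hθ₁⟩ := hθ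
  have hc : 0 < 1 - θ := by linarith
  have hsum : ∑ x, P1 x = ∑ x, P2 x := hP1.2.trans hP2.2.symm
  have h₂₁ := strictMonoOn_GJS_lineMap hP2pos hP1.1 hsum.symm (Ne.symm hne) (div_pos hc hr)
  have h₁₂ := strictMonoOn_GJS_lineMap hP1pos hP2.1 hsum hne (div_pos hc hr)
  have hscale : ∀ Δ ∈ Ico 0 ((1 - 2 * θ) / 2), Δ / (1 - θ) ∈ Icc (0 : ℝ) 1 := fun Δ hΔ =>
    ⟨div_nonneg hΔ.1 hc.le, (div_le_one hc).2 (by linarith [hΔ.2])⟩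
  refine ⟨fun Δ hΔ Δ' hΔ' hlt => ?_, ?_⟩
  · have hlt' : Δ / (1 - θ) < Δ' / (1 - θ) := div_lt_div_of_pos_right hlt hc
    rw [Gmin_eq_min_lineMap P1 P2 hc.ne' Δ, Gmin_eq_min_lineMap P1 P2 hc.ne' Δ']
    exact lt_min
      ((min_le_left _ _).trans_lt
        (mul_lt_mul_of_pos_left (h₂₁ (hscale Δ hΔ) (hscale Δ' hΔ') hlt') hr))
      ((min_le_right _ _).trans_lt
        (mul_lt_mul_of_pos_left (h₁₂ (hscale Δ hΔ) (hscale Δ' hΔ') hlt') hr))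
  · have ha : (1 - θ) / r + 1 ≠ 0 := by positivity
    rw [Gmin_eq_min_lineMap P1 P2 hc.ne' 0, zero_div, lineMap_apply_zero,
      lineMap_apply_zero, GJS_self P2 ha, GJS_self P1 ha, mul_zero, min_self]

/-- `G_min` is strictly increasing on `[0, (1−2θ)/2)` and `G_min(0) = 0`. -/
theorem Gmin_strictMonoOn_and_zero [Nonempty X]
    (P1 P2 : X → ℝ) (hP1 : IsProbDist P1) (hP2 : IsProbDist P2)
    (hP1pos : ∀ x, 0 < P1 x) (hP2pos : ∀ x, 0 < P2 x) (hne : P1 ≠ P2)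
    {r θ : ℝ} (hr : 0 < r) (hθ : θ ∈ Set.Ioo (0 : ℝ) (1 / 2)) :
    StrictMonoOn (Gmin P1 P2 r θ) (Set.Ico (0 : ℝ) ((1 - 2 * θ) / 2)) ∧
      Gmin P1 P2 r θ 0 = 0 :=
  Gmin_strictMonoOn_and_zero_general P1 P2 hP1 hP2 hP1pos hP2pos hne hr hθ

end StmtNS
end

section
/- Fix a nonempty finite set 𝒳, full-support probability distributions P1 ≠ P2 on 𝒳, r > 0, θ ∈ (0,1/2) and ζ ∈ (0,1−2θ). Then the function g1(α) = GJS( (ζ·P1 + (1−α)·P2)/(1−α+ζ), P2, (1−α+ζ)/r ) is monotonically nondecreasing in α on the interval [θ+ζ, 1−θ]. -/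
/-!
With `J(s, t) = s log s + t log t - (s + t) log (s + t)`, which is convex and 1-homogeneous,
`GJS(Q, Q̃, a) = ∑ₓ J(a Q x, Q̃ x) - J(a, 1)` is the Jensen gap of `J` at the pair `(a Q, Q̃)`.
For `g1` this pair is, up to the factor `1/r`, `(u, v) = (ζ P1 + (1 - α) P2, r P2)`, so increasing
`α` moves `u` against the direction `v`. Along `s ↦ (u + s v, v)` the gap has derivative
`∑ₓ v log (u / (u + v)) - V log (U / (U + V))` (capitals denote totals), which is `≤ 0`
termwise after `log y ≤ y - 1` and a tangent-plane bound.
-/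

namespace StmtNS

variable {X : Type*} [Fintype X]

open Real Finset

noncomputable def jsKernel (s t : ℝ) : ℝ := negMulLog (s + t) - negMulLog s - negMulLog t

lemma jsKernel_mul (c s t : ℝ) : jsKernel (c * s) (c * t) = c * jsKernel s t := by
  simp only [jsKernel, ← mul_add, negMulLog_mul]
  ring

lemma hasDerivAt_jsKernel_left {s t : ℝ} (hs : s ≠ 0) (hst : s + t ≠ 0) :
    HasDerivAt (fun s => jsKernel s t) (log (s / (s + t))) s := by
  have h := ((hasDerivAt_negMulLog hst).comp s ((hasDerivAt_id s).add_const t)).sub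
    (hasDerivAt_negMulLog hs)
  rw [show log (s / (s + t)) = (-log (s + t) - 1) * 1 - (-log s - 1) by rw [log_div hs hst]; ring]
  exact h.sub_const (negMulLog t)

lemma mul_log_div_add_sub_le {u v U V : ℝ} (hu : 0 < u) (hv : 0 < v) (hU : 0 < U) (hV : 0 < V) :
    v * (log (u / (u + v)) - log (U / (U + V))) ≤ (V ^ 2 * u + U ^ 2 * v) / (U * (U + V)) - v := by
  have hratio : 0 < u / (u + v) / (U / (U + V)) := by positivity
  -- `(u, v) ↦ u v / (u + v)` is concave and 1-homogeneous, so lies below its tangent plane at `(U, V)`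
  have htangent : v * (u / (u + v) / (U / (U + V))) ≤ (V ^ 2 * u + U ^ 2 * v) / (U * (U + V)) := by
    rw [show v * (u / (u + v) / (U / (U + V))) = u * v * (U + V) / (U * (u + v)) by field_simp,
      div_le_div_iff₀ (by positivity) (by positivity)]
    nlinarith [sq_nonneg (V * u - U * v), mul_pos hU hV]
  calc v * (log (u / (u + v)) - log (U / (U + V)))
      = v * log (u / (u + v) / (U / (U + V))) := by rw [← log_div (by positivity) (by positivity)]
    _ ≤ v * (u / (u + v) / (U / (U + V)) - 1) := by gcongr; exact log_le_sub_one_of_pos hratio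
    _ ≤ _ := by linarith

noncomputable def jsGap (u v : X → ℝ) : ℝ :=
  ∑ x, jsKernel (u x) (v x) - jsKernel (∑ x, u x) (∑ x, v x)

lemma jsGap_mul (c : ℝ) (u v : X → ℝ) :
    jsGap (fun x => c * u x) (fun x => c * v x) = c * jsGap u v := by
  simp only [jsGap, jsKernel_mul, ← mul_sum, mul_sub]

lemma GJS_eq_jsGap {Q Qt : X → ℝ} (hQ : ∀ x, 0 < Q x) (hQt : ∀ x, 0 < Qt x)
    (hQs : ∑ x, Q x = 1) (hQts : ∑ x, Qt x = 1) {a : ℝ} (ha : 0 < a) :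
    GJS Q Qt a = jsGap (fun x => a * Q x) Qt := by
  have hterm : ∀ x,
      a * (if 0 < Q x then Q x * log (Q x / ((a * Q x + Qt x) / (a + 1))) else 0) +
        (if 0 < Qt x then Qt x * log (Qt x / ((a * Q x + Qt x) / (a + 1))) else 0) =
      jsKernel (a * Q x) (Qt x) + ((a * Q x + Qt x) * log (a + 1) - a * Q x * log a) := by
    intro x
    have hQx := hQ x
    have hQtx := hQt x
    have hmix : 0 < a * Q x + Qt x := by positivity
    have hM : (a * Q x + Qt x) / (a + 1) ≠ 0 := by positivity
    rw [if_pos hQx, if_pos hQtx]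
    simp only [jsKernel, negMulLog, log_div hQx.ne' hM, log_div hQtx.ne' hM,
      log_div hmix.ne' (by positivity : a + 1 ≠ 0), log_mul ha.ne' hQx.ne']
    ring
  have hcorr : ∑ x, ((a * Q x + Qt x) * log (a + 1) - a * Q x * log a) = -jsKernel a 1 := by
    rw [sum_sub_distrib, ← sum_mul, ← sum_mul, sum_add_distrib, ← mul_sum, hQs, hQts]
    simp only [jsKernel, negMulLog, log_one]
    ring
  unfold GJS KL jsGap
  rw [mul_sum, ← sum_add_distrib, sum_congr rfl fun x _ => hterm x, sum_add_distrib, hcorr,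
    ← mul_sum, hQs, hQts, mul_one]
  ring

lemma sum_mul_log_div_add_le [Nonempty X] {u v : X → ℝ} (hu : ∀ x, 0 < u x) (hv : ∀ x, 0 < v x) :
    ∑ x, v x * log (u x / (u x + v x)) ≤
      (∑ x, v x) * log ((∑ x, u x) / (∑ x, u x + ∑ x, v x)) := by
  set U := ∑ x, u x
  set V := ∑ x, v x
  have hU : 0 < U := sum_pos (fun x _ => hu x) univ_nonempty
  have hV : 0 < V := sum_pos (fun x _ => hv x) univ_nonempty
  have h := sum_le_sum fun x (_ : x ∈ univ) => mul_log_div_add_sub_le (hu x) (hv x) hU hV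
  have htangent_sum : ∑ x, ((V ^ 2 * u x + U ^ 2 * v x) / (U * (U + V)) - v x) = 0 := by
    rw [sum_sub_distrib, ← sum_div, sum_add_distrib, ← mul_sum, ← mul_sum]
    field_simp
    ring
  simp only [mul_sub] at h
  rw [htangent_sum, sum_sub_distrib, ← sum_mul] at h
  linarith

lemma hasDerivAt_jsGap_add_mul [Nonempty X] {w v : X → ℝ} (hw : ∀ x, 0 ≤ w x)
    (hv : ∀ x, 0 < v x) {s : ℝ} (hs : 0 < s) :
    HasDerivAt (fun s => jsGap (fun x => w x + s * v x) v)
      (∑ x, v x * log ((w x + s * v x) / (w x + s * v x + v x)) -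
        (∑ x, v x) * log ((∑ x, (w x + s * v x)) / (∑ x, (w x + s * v x) + ∑ x, v x))) s := by
  have hu : ∀ x, 0 < w x + s * v x := fun x => by have := hw x; have := hv x; positivity
  have hU : 0 < ∑ x, (w x + s * v x) := sum_pos (fun x _ => hu x) univ_nonempty
  have hV : 0 < ∑ x, v x := sum_pos (fun x _ => hv x) univ_nonempty
  have hline : ∀ x, HasDerivAt (fun s => w x + s * v x) (v x) s :=
    fun x => (hasDerivAt_mul_const (v x)).const_add (w x)
  have hterm : ∀ x ∈ univ, HasDerivAt (fun s => jsKernel (w x + s * v x) (v x))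
      (v x * log ((w x + s * v x) / (w x + s * v x + v x))) s := fun x _ => by
    have h := (hasDerivAt_jsKernel_left (hu x).ne'
      (by linarith [hu x, hv x] : w x + s * v x + v x ≠ 0)).comp s (hline x)
    exact h.congr_deriv (mul_comm _ _)
  have htotal := ((hasDerivAt_jsKernel_left hU.ne' (by linarith)).comp s
    (HasDerivAt.fun_sum fun x (_ : x ∈ univ) => hline x)).congr_deriv (mul_comm _ _)
  exact (HasDerivAt.fun_sum hterm).sub htotal

lemma antitoneOn_jsGap_add_mul [Nonempty X] {w v : X → ℝ} (hw : ∀ x, 0 ≤ w x)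
    (hv : ∀ x, 0 < v x) :
    AntitoneOn (fun s => jsGap (fun x => w x + s * v x) v) (Set.Ioi 0) := by
  have hderiv := fun s (hs : s ∈ Set.Ioi (0 : ℝ)) => hasDerivAt_jsGap_add_mul hw hv hs
  refine antitoneOn_of_deriv_nonpos (convex_Ioi 0)
    (fun s hs => (hderiv s hs).continuousAt.continuousWithinAt)
    (fun s hs => (hderiv s (interior_subset hs)).differentiableAt.differentiableWithinAt)
    (fun s hs => ?_)
  have hs : 0 < s := interior_subset hs
  rw [(hderiv s hs).deriv]
  have hu : ∀ x, 0 < w x + s * v x := fun x => by have := hw x; have := hv x; positivity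
  exact sub_nonpos.2 (sum_mul_log_div_add_le hu hv)

theorem g1_monotoneOn_general [Nonempty X]
    (P1 P2 : X → ℝ) (hP1 : IsProbDist P1) (hP2 : IsProbDist P2)
    (hP2pos : ∀ x, 0 < P2 x)
    {r θ ζ : ℝ} (hr : 0 < r) (hθ : θ ∈ Set.Ioo (0 : ℝ) (1 / 2))
    (hζ : ζ ∈ Set.Ioo (0 : ℝ) (1 - 2 * θ)) :
    MonotoneOn
      (fun α : ℝ =>
        GJS (fun x => (ζ * P1 x + (1 - α) * P2 x) / (1 - α + ζ)) P2 ((1 - α + ζ) / r))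
      (Set.Icc (θ + ζ) (1 - θ)) := by
  have h1α : ∀ α ∈ Set.Icc (θ + ζ) (1 - θ), 0 < 1 - α := fun α hα => by linarith [hα.2, hθ.1]
  have hg : ∀ α ∈ Set.Icc (θ + ζ) (1 - θ),
      GJS (fun x => (ζ * P1 x + (1 - α) * P2 x) / (1 - α + ζ)) P2 ((1 - α + ζ) / r) =
        r⁻¹ * jsGap (fun x => ζ * P1 x + (1 - α) / r * (r * P2 x)) (fun x => r * P2 x) := by
    intro α hα
    have hβ : 0 < 1 - α + ζ := by linarith [h1α α hα, hζ.1]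
    have hQ : ∀ x, 0 < (ζ * P1 x + (1 - α) * P2 x) / (1 - α + ζ) := fun x => by
      have := hP1.1 x; have := hP2pos x; have := hζ.1; have := h1α α hα; positivity
    have hQs : ∑ x, (ζ * P1 x + (1 - α) * P2 x) / (1 - α + ζ) = 1 := by
      rw [← sum_div, sum_add_distrib, ← mul_sum, ← mul_sum, hP1.2, hP2.2, div_eq_one_iff_eq hβ.ne']
      ring
    rw [GJS_eq_jsGap hQ hP2pos hQs hP2.2 (div_pos hβ hr), ← jsGap_mul]
    congr 1 <;> funext x <;> field_simp
  have hanti := antitoneOn_jsGap_add_mul (w := fun x => ζ * P1 x) (v := fun x => r * P2 x)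
    (fun x => mul_nonneg hζ.1.le (hP1.1 x)) (fun x => mul_pos hr (hP2pos x))
  intro a ha b hb hab
  simp only [hg a ha, hg b hb]
  exact mul_le_mul_of_nonneg_left
    (hanti (div_pos (h1α b hb) hr) (div_pos (h1α a ha) hr) (by gcongr)) (inv_nonneg.2 hr.le)

/-- `g1(α) = GJS((ζ·P1 + (1−α)·P2)/(1−α+ζ), P2, (1−α+ζ)/r)` is
monotonically nondecreasing on `[θ+ζ, 1−θ]`. -/
theorem g1_monotoneOn [Nonempty X]
    (P1 P2 : X → ℝ) (hP1 : IsProbDist P1) (hP2 : IsProbDist P2)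
    (hP1pos : ∀ x, 0 < P1 x) (hP2pos : ∀ x, 0 < P2 x) (hne : P1 ≠ P2)
    {r θ ζ : ℝ} (hr : 0 < r) (hθ : θ ∈ Set.Ioo (0 : ℝ) (1 / 2))
    (hζ : ζ ∈ Set.Ioo (0 : ℝ) (1 - 2 * θ)) :
    MonotoneOn
      (fun α : ℝ =>
        GJS (fun x => (ζ * P1 x + (1 - α) * P2 x) / (1 - α + ζ)) P2 ((1 - α + ζ) / r))
      (Set.Icc (θ + ζ) (1 - θ)) :=
  g1_monotoneOn_general P1 P2 hP1 hP2 hP2pos hr hθ hζ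

end StmtNS
end

section
/- Fix a nonempty finite set 𝒳, full-support probability distributions P1 ≠ P2 on 𝒳, r > 0, θ ∈ (0,1/2) and ζ ∈ (0,1−2θ). Then the function g2(α) = GJS( (α·P1 + ζ·P2)/(α+ζ), P1, (α+ζ)/r ) is monotonically nonincreasing in α on the interval [θ, 1−θ−ζ]. -/
theorem ConcaveOn.add_sub_le_add_sub {𝕜 : Type*} [Field 𝕜] [LinearOrder 𝕜]
    [IsStrictOrderedRing 𝕜] {s : Set 𝕜} {f : 𝕜 → 𝕜} (hf : ConcaveOn 𝕜 s f) {x y r : 𝕜}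
    (hx : x ∈ s) (hyr : y + r ∈ s) (hxy : x ≤ y) (hr : 0 < r) :
    f (y + r) - f y ≤ f (x + r) - f x := by
  have hxr : x + r ∈ s := hf.1.ordConnected.out hx hyr ⟨by linarith, by linarith⟩
  have hy : y ∈ s := hf.1.ordConnected.out hx hyr ⟨hxy, by linarith⟩
  have h₁ : slope f x (y + r) ≤ slope f x (x + r) :=
    hf.slope_anti hx ⟨hxr, by simp [hr.ne']⟩ ⟨hyr, by simp; linarith⟩ (by linarith)
  have h₂ : slope f (y + r) y ≤ slope f (y + r) x :=
    hf.slope_anti hyr ⟨hx, by simp; linarith⟩ ⟨hy, by simp [hr.ne']⟩ hxy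
  rw [slope_comm f _ y, slope_comm f _ x] at h₂
  simp only [slope_def_field, add_sub_cancel_left] at h₁ h₂
  exact (div_le_div_iff_of_pos_right hr).1 (h₂.trans h₁)

namespace StmtNS

variable {X : Type*} {P₁ P₂ : X → ℝ} {a b : ℝ}

noncomputable def mix (P₁ P₂ : X → ℝ) (a b : ℝ) : X → ℝ :=
  fun x => (a * P₁ x + b * P₂ x) / (a + b)

theorem mix_pos (hP₁ : ∀ x, 0 < P₁ x) (hP₂ : ∀ x, 0 < P₂ x) (ha : 0 < a) (hb : 0 < b) :
    ∀ x, 0 < mix P₁ P₂ a b x := fun x => by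
  have := hP₁ x; have := hP₂ x
  unfold mix; positivity

variable [Fintype X]

theorem sum_mix (hP₁ : ∑ x, P₁ x = 1) (hP₂ : ∑ x, P₂ x = 1) (hab : a + b ≠ 0) :
    ∑ x, mix P₁ P₂ a b x = 1 := by
  simp only [mix, ← Finset.sum_div, Finset.sum_add_distrib, ← Finset.mul_sum, hP₁, hP₂,
    mul_one, div_self hab]

theorem KL_eq_sum_mul_log_sub {P Q : X → ℝ} (hP : ∀ x, 0 < P x) (hQ : ∀ x, 0 < Q x) :
    KL P Q = ∑ x, P x * (Real.log (P x) - Real.log (Q x)) :=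
  Finset.sum_congr rfl fun x _ => by rw [if_pos (hP x), Real.log_div (hP x).ne' (hQ x).ne']

theorem KL_nonneg {P Q : X → ℝ} (hP : ∀ x, 0 < P x) (hQ : ∀ x, 0 < Q x)
    (hPsum : ∑ x, P x = 1) (hQsum : ∑ x, Q x = 1) : 0 ≤ KL P Q := by
  have termwise : ∀ x, P x - Q x ≤ P x * (Real.log (P x) - Real.log (Q x)) := fun x => by
    have h := Real.log_le_sub_one_of_pos (div_pos (hQ x) (hP x))
    rw [Real.log_div (hQ x).ne' (hP x).ne', le_sub_iff_add_le, le_div_iff₀ (hP x)] at h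
    linarith
  calc (0 : ℝ) = ∑ x, (P x - Q x) := by rw [Finset.sum_sub_distrib, hPsum, hQsum, sub_self]
    _ ≤ KL P Q := by
      rw [KL_eq_sum_mul_log_sub hP hQ]
      exact Finset.sum_le_sum fun x _ => termwise x

noncomputable def weightedJS (P₁ P₂ : X → ℝ) (a b : ℝ) : ℝ :=
  a * KL P₁ (mix P₁ P₂ a b) + b * KL P₂ (mix P₁ P₂ a b)

theorem add_KL_eq_weightedJS_add (hP₁ : ∀ x, 0 < P₁ x) (hP₂ : ∀ x, 0 < P₂ x)
    {Q : X → ℝ} (hQ : ∀ x, 0 < Q x) (ha : 0 < a) (hb : 0 < b) :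
    a * KL P₁ Q + b * KL P₂ Q = weightedJS P₁ P₂ a b + (a + b) * KL (mix P₁ P₂ a b) Q := by
  have hM := mix_pos hP₁ hP₂ ha hb
  simp only [weightedJS, KL_eq_sum_mul_log_sub hP₁ hQ, KL_eq_sum_mul_log_sub hP₂ hQ,
    KL_eq_sum_mul_log_sub hP₁ hM, KL_eq_sum_mul_log_sub hP₂ hM, KL_eq_sum_mul_log_sub hM hQ,
    Finset.mul_sum, ← Finset.sum_add_distrib]
  refine Finset.sum_congr rfl fun x _ => ?_
  have hmix : (a + b) * mix P₁ P₂ a b x = a * P₁ x + b * P₂ x := by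
    unfold mix; field_simp
  linear_combination (Real.log (Q x) - Real.log (mix P₁ P₂ a b x)) * hmix

theorem weightedJS_le_add_KL (hP₁ : ∀ x, 0 < P₁ x) (hP₂ : ∀ x, 0 < P₂ x)
    (hP₁sum : ∑ x, P₁ x = 1) (hP₂sum : ∑ x, P₂ x = 1) {Q : X → ℝ} (hQ : ∀ x, 0 < Q x)
    (hQsum : ∑ x, Q x = 1) (ha : 0 < a) (hb : 0 < b) :
    weightedJS P₁ P₂ a b ≤ a * KL P₁ Q + b * KL P₂ Q := by
  rw [add_KL_eq_weightedJS_add hP₁ hP₂ hQ ha hb, le_add_iff_nonneg_right]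
  exact mul_nonneg (by positivity) <|
    KL_nonneg (mix_pos hP₁ hP₂ ha hb) hQ (sum_mix hP₁sum hP₂sum (by positivity)) hQsum

/-- Concave as the pointwise infimum, over `Q`, of the affine functions
`a ↦ a D(P₁‖Q) + b D(P₂‖Q)`. -/
theorem concaveOn_weightedJS (hP₁ : ∀ x, 0 < P₁ x) (hP₂ : ∀ x, 0 < P₂ x)
    (hP₁sum : ∑ x, P₁ x = 1) (hP₂sum : ∑ x, P₂ x = 1) (hb : 0 < b) :
    ConcaveOn ℝ (Set.Ioi 0) fun a => weightedJS P₁ P₂ a b := by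
  refine ⟨convex_Ioi 0, fun a₁ (ha₁ : 0 < a₁) a₂ (ha₂ : 0 < a₂) s t hs ht hst => ?_⟩
  simp only [smul_eq_mul]
  set a := s * a₁ + t * a₂
  have ha : 0 < a := by
    simpa only [smul_eq_mul, Set.mem_Ioi] using convex_Ioi (0 : ℝ) ha₁ ha₂ hs ht hst
  set M := mix P₁ P₂ a b
  have hM := mix_pos hP₁ hP₂ ha hb
  have hMsum := sum_mix hP₁sum hP₂sum (a := a) (b := b) (by positivity)
  calc s * weightedJS P₁ P₂ a₁ b + t * weightedJS P₁ P₂ a₂ b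
      ≤ s * (a₁ * KL P₁ M + b * KL P₂ M) + t * (a₂ * KL P₁ M + b * KL P₂ M) := by
        gcongr
        · exact weightedJS_le_add_KL hP₁ hP₂ hP₁sum hP₂sum hM hMsum ha₁ hb
        · exact weightedJS_le_add_KL hP₁ hP₂ hP₁sum hP₂sum hM hMsum ha₂ hb
    _ = weightedJS P₁ P₂ a b := by
        simp only [weightedJS, M, a]
        linear_combination (b * KL P₂ (mix P₁ P₂ (s * a₁ + t * a₂) b)) * hst

/-- The mixture taken inside this GJS divergence is `mix P₁ P₂ (α + r) ζ`. -/
theorem mul_GJS_mix_eq_sub (hP₁ : ∀ x, 0 < P₁ x) (hP₂ : ∀ x, 0 < P₂ x) {α ζ r : ℝ}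
    (hα : 0 < α) (hζ : 0 < ζ) (hr : 0 < r) :
    r * GJS (mix P₁ P₂ α ζ) P₁ ((α + ζ) / r)
      = weightedJS P₁ P₂ (α + r) ζ - weightedJS P₁ P₂ α ζ := by
  have hGJSmix : (fun x => ((α + ζ) / r * mix P₁ P₂ α ζ x + P₁ x) / ((α + ζ) / r + 1))
      = mix P₁ P₂ (α + r) ζ := by
    funext x
    simp only [mix]
    field_simp
    ring
  have hcomp := add_KL_eq_weightedJS_add hP₁ hP₂
    (mix_pos hP₁ hP₂ (add_pos hα hr) hζ) hα hζ
  rw [GJS, hGJSmix, weightedJS]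
  field_simp
  linear_combination -hcomp

theorem antitoneOn_GJS_mix (hP₁ : ∀ x, 0 < P₁ x) (hP₂ : ∀ x, 0 < P₂ x)
    (hP₁sum : ∑ x, P₁ x = 1) (hP₂sum : ∑ x, P₂ x = 1) {r ζ : ℝ} (hr : 0 < r) (hζ : 0 < ζ) :
    AntitoneOn (fun α => GJS (mix P₁ P₂ α ζ) P₁ ((α + ζ) / r)) (Set.Ioi 0) := by
  intro α (hα : 0 < α) β (hβ : 0 < β) hαβ
  rw [← mul_le_mul_iff_right₀ hr, mul_GJS_mix_eq_sub hP₁ hP₂ hβ hζ hr,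
    mul_GJS_mix_eq_sub hP₁ hP₂ hα hζ hr]
  exact (concaveOn_weightedJS hP₁ hP₂ hP₁sum hP₂sum hζ).add_sub_le_add_sub hα
    (show 0 < β + r by positivity) hαβ hr

theorem g2_antitoneOn_general
    (P1 P2 : X → ℝ) (hP1 : IsProbDist P1) (hP2 : IsProbDist P2)
    (hP1pos : ∀ x, 0 < P1 x) (hP2pos : ∀ x, 0 < P2 x)
    {r θ ζ : ℝ} (hr : 0 < r) (hθ : θ ∈ Set.Ioo (0 : ℝ) (1 / 2))
    (hζ : ζ ∈ Set.Ioo (0 : ℝ) (1 - 2 * θ)) :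
    AntitoneOn
      (fun α : ℝ =>
        GJS (fun x => (α * P1 x + ζ * P2 x) / (α + ζ)) P1 ((α + ζ) / r))
      (Set.Icc θ (1 - θ - ζ)) :=
  (antitoneOn_GJS_mix hP1pos hP2pos hP1.2 hP2.2 hr hζ.1).mono
    fun _ hα => hθ.1.trans_le hα.1

/-- `g2(α) = GJS((α·P1 + ζ·P2)/(α+ζ), P1, (α+ζ)/r)` is
monotonically nonincreasing on `[θ, 1−θ−ζ]`. -/
theorem g2_antitoneOn [Nonempty X]
    (P1 P2 : X → ℝ) (hP1 : IsProbDist P1) (hP2 : IsProbDist P2)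
    (hP1pos : ∀ x, 0 < P1 x) (hP2pos : ∀ x, 0 < P2 x) (hne : P1 ≠ P2)
    {r θ ζ : ℝ} (hr : 0 < r) (hθ : θ ∈ Set.Ioo (0 : ℝ) (1 / 2))
    (hζ : ζ ∈ Set.Ioo (0 : ℝ) (1 - 2 * θ)) :
    AntitoneOn
      (fun α : ℝ =>
        GJS (fun x => (α * P1 x + ζ * P2 x) / (α + ζ)) P1 ((α + ζ) / r))
      (Set.Icc θ (1 - θ - ζ)) :=
  g2_antitoneOn_general P1 P2 hP1 hP2 hP1pos hP2pos hr hθ hζ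

end StmtNS
end

section
/- Let 𝒳 be a nonempty finite set, let P1 ≠ P2 be full-support probability distributions on 𝒳 and let β > 0. Then the function φ(t) = GJS(t·P1 + (1−t)·P2, P2, β) is strictly increasing on the interval [0,1). -/
/-!
Unfolding the definitions, `GJS(Q, P₂, β)` is a sum over `x` of
`g(q) = β q log(q/m) + b log(b/m)` with `q = Q x`, `b = P₂ x` and `m = (β q + b)/(β + 1)`.
Since `g'(q) = β log(q/m)` and `q - m = (q - b)/(β + 1)`, each summand decreases on `(0, b]`
and increases on `[b, ∞)`. As `t` grows, `t P₁ x + (1 - t) P₂ x` moves away from `P₂ x`,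
so every summand is monotone in `t`, strictly so wherever `P₁ x ≠ P₂ x`.
-/

namespace Stmt5

variable {X : Type*} [Fintype X]

/-- `P` is a probability distribution on the finite set `X`. -/
def IsProbDist (P : X → ℝ) : Prop := (∀ x, 0 ≤ P x) ∧ (∑ x, P x) = 1

/-- Kullback–Leibler divergence `D(P‖Q) = ∑_{x : P(x) > 0} P(x) log (P(x)/Q(x))`. -/
noncomputable def KL (P Q : X → ℝ) : ℝ :=
  ∑ x, if 0 < P x then P x * Real.log (P x / Q x) else 0

/-- Generalized Jensen–Shannon divergence. -/
noncomputable def GJS (Q Qt : X → ℝ) (a : ℝ) : ℝ :=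
  a * KL Q (fun x => (a * Q x + Qt x) / (a + 1)) +
    KL Qt (fun x => (a * Q x + Qt x) / (a + 1))

open Real Set Finset

theorem strictMonoOn_finset_sum {ι α M : Type*} [Preorder α] [AddCommMonoid M] [PartialOrder M]
    [IsOrderedCancelAddMonoid M] {s : Finset ι} {f : ι → α → M} {D : Set α}
    (hmono : ∀ i ∈ s, MonotoneOn (f i) D) (hstrict : ∃ i ∈ s, StrictMonoOn (f i) D) :
    StrictMonoOn (fun t => ∑ i ∈ s, f i t) D := by
  intro u hu v hv huv
  obtain ⟨i, hi, hfi⟩ := hstrict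
  exact Finset.sum_lt_sum (fun j hj => hmono j hj hu hv huv.le) ⟨i, hi, hfi hu hv huv⟩

theorem mix_pos_of_mem_Ico {a b t : ℝ} (ha : 0 ≤ a) (hb : 0 < b) (ht : t ∈ Ico (0 : ℝ) 1) :
    0 < t * a + (1 - t) * b := by
  have := mul_nonneg ht.1 ha
  nlinarith [ht.2]

noncomputable def gjsSummand (β b q : ℝ) : ℝ :=
  β * (q * (log q - log ((β * q + b) / (β + 1)))) + b * (log b - log ((β * q + b) / (β + 1)))

theorem GJS_eq_sum_gjsSummand {Q Qt : X → ℝ} (hQ : ∀ x, 0 < Q x) (hQt : ∀ x, 0 < Qt x)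
    {β : ℝ} (hβ : 0 ≤ β) : GJS Q Qt β = ∑ x, gjsSummand β (Qt x) (Q x) := by
  rw [GJS, KL, KL, Finset.mul_sum, ← Finset.sum_add_distrib]
  refine Finset.sum_congr rfl fun x _ => ?_
  have hm : (β * Q x + Qt x) / (β + 1) ≠ 0 := by
    have := hQ x; have := hQt x; positivity
  rw [if_pos (hQ x), if_pos (hQt x), log_div (hQ x).ne' hm, log_div (hQt x).ne' hm, gjsSummand]

theorem hasDerivAt_gjsSummand {β b q : ℝ} (hβ : 0 ≤ β) (hb : 0 < b) (hq : 0 < q) :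
    HasDerivAt (gjsSummand β b) (β * (log q - log ((β * q + b) / (β + 1)))) q := by
  have hβ1 : β + 1 ≠ 0 := by positivity
  have hsum : β * q + b ≠ 0 := by positivity
  have hm : HasDerivAt (fun q => (β * q + b) / (β + 1)) (β / (β + 1)) q := by
    simpa using (((hasDerivAt_id q).const_mul β).add_const b).div_const (β + 1)
  have hlogm := hm.log (div_ne_zero hsum hβ1)
  have hlogq := hasDerivAt_log hq.ne'
  refine ((((hasDerivAt_id q).mul (hlogq.sub hlogm)).const_mul β).add
    ((hlogm.const_sub (log b)).const_mul b)).congr_deriv ?_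
  simp only [Pi.sub_apply, id]
  field_simp
  ring

theorem log_sub_log_mid_pos {β b q : ℝ} (hβ : 0 ≤ β) (hb : 0 < b) (hbq : b < q) :
    0 < log q - log ((β * q + b) / (β + 1)) := by
  have hβ1 : 0 < β + 1 := by positivity
  have hq : 0 < q := hb.trans hbq
  refine sub_pos.2 (log_lt_log (by positivity) ?_)
  rw [div_lt_iff₀ hβ1]
  linarith

theorem log_sub_log_mid_neg {β b q : ℝ} (hβ : 0 ≤ β) (hq : 0 < q) (hqb : q < b) :
    log q - log ((β * q + b) / (β + 1)) < 0 := by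
  have hβ1 : 0 < β + 1 := by positivity
  refine sub_neg.2 (log_lt_log hq ?_)
  rw [lt_div_iff₀ hβ1]
  linarith

theorem gjsSummand_strictMonoOn_Ici {β b : ℝ} (hβ : 0 < β) (hb : 0 < b) :
    StrictMonoOn (gjsSummand β b) (Ici b) := by
  refine strictMonoOn_of_deriv_pos (convex_Ici b)
    (fun q hq => (hasDerivAt_gjsSummand hβ.le hb (hb.trans_le hq)).continuousAt.continuousWithinAt)
    fun q hq => ?_
  rw [interior_Ici] at hq
  rw [(hasDerivAt_gjsSummand hβ.le hb (hb.trans hq)).deriv]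
  exact mul_pos hβ (log_sub_log_mid_pos hβ.le hb hq)

theorem gjsSummand_strictAntiOn_Ioc {β b : ℝ} (hβ : 0 < β) (hb : 0 < b) :
    StrictAntiOn (gjsSummand β b) (Ioc 0 b) := by
  refine strictAntiOn_of_deriv_neg (convex_Ioc 0 b)
    (fun q hq => (hasDerivAt_gjsSummand hβ.le hb hq.1).continuousAt.continuousWithinAt)
    fun q hq => ?_
  rw [interior_Ioc] at hq
  rw [(hasDerivAt_gjsSummand hβ.le hb hq.1).deriv]
  exact mul_neg_of_pos_of_neg hβ (log_sub_log_mid_neg hβ.le hq.1 hq.2)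

theorem gjsSummand_mix_strictMonoOn {β a b : ℝ} (hβ : 0 < β) (ha : 0 ≤ a) (hb : 0 < b)
    (hab : a ≠ b) : StrictMonoOn (fun t => gjsSummand β b (t * a + (1 - t) * b)) (Ico 0 1) := by
  intro s hs t ht hst
  rcases hab.lt_or_gt with hlt | hgt
  · exact gjsSummand_strictAntiOn_Ioc hβ hb ⟨mix_pos_of_mem_Ico ha hb ht, by nlinarith [ht.1]⟩
      ⟨mix_pos_of_mem_Ico ha hb hs, by nlinarith [hs.1]⟩ (by nlinarith)
  · exact gjsSummand_strictMonoOn_Ici hβ hb (by simp only [Set.mem_Ici]; nlinarith [hs.1])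
      (by simp only [Set.mem_Ici]; nlinarith [ht.1]) (by nlinarith)

theorem gjsSummand_mix_monotoneOn {β a b : ℝ} (hβ : 0 < β) (ha : 0 ≤ a) (hb : 0 < b) :
    MonotoneOn (fun t => gjsSummand β b (t * a + (1 - t) * b)) (Ico 0 1) := by
  by_cases hab : a = b
  · subst hab
    simpa only [← add_mul, add_sub_cancel, one_mul] using monotoneOn_const
  · exact (gjsSummand_mix_strictMonoOn hβ ha hb hab).monotoneOn

theorem gjs_mix_strictMonoOn_general
    (P1 P2 : X → ℝ)
    (hP1pos : ∀ x, 0 < P1 x) (hP2pos : ∀ x, 0 < P2 x) (hne : P1 ≠ P2)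
    {β : ℝ} (hβ : 0 < β) :
    StrictMonoOn (fun t : ℝ => GJS (fun x => t * P1 x + (1 - t) * P2 x) P2 β)
      (Set.Ico (0 : ℝ) 1) := by
  obtain ⟨x₀, hx₀⟩ := Function.ne_iff.mp hne
  refine (strictMonoOn_finset_sum (s := univ)
    (fun x _ => gjsSummand_mix_monotoneOn hβ (hP1pos x).le (hP2pos x))
    ⟨x₀, mem_univ x₀, gjsSummand_mix_strictMonoOn hβ (hP1pos x₀).le (hP2pos x₀) hx₀⟩).congr
    fun t ht => ?_
  exact (GJS_eq_sum_gjsSummand (fun x => mix_pos_of_mem_Ico (hP1pos x).le (hP2pos x) ht)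
    hP2pos hβ.le).symm

/-- `t ↦ GJS(t·P1 + (1−t)·P2, P2, β)` is strictly increasing on `[0,1)`. -/
theorem gjs_mix_strictMonoOn [Nonempty X]
    (P1 P2 : X → ℝ) (hP1 : IsProbDist P1) (hP2 : IsProbDist P2)
    (hP1pos : ∀ x, 0 < P1 x) (hP2pos : ∀ x, 0 < P2 x) (hne : P1 ≠ P2)
    {β : ℝ} (hβ : 0 < β) :
    StrictMonoOn (fun t : ℝ => GJS (fun x => t * P1 x + (1 - t) * P2 x) P2 β)
      (Set.Ico (0 : ℝ) 1) :=
  gjs_mix_strictMonoOn_general P1 P2 hP1pos hP2pos hne hβ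

end Stmt5
end

section
/- Let 𝒳 be a nonempty finite set, let P1, P2 be full-support probability distributions on 𝒳 and let r' > 0. Then for every t ∈ [0,1], ∑_{x∈𝒳} (t+r')·(t·P1(x) + (1−t)·P2(x))·P2(x) / ( r'·t·P1(x) + (r' − r'·t + t)·P2(x) ) ≤ 1, with equality when t = 0. -/
/-! With `Q = t • P1 + (1 - t) • P2`, the denominator is `r' Q(x) + t P2(x)`, so each summand is
the weighted harmonic mean of `Q(x)` and `P2(x)` with weights `t, r'`. Bounding it by the weighted
arithmetic mean `(t Q(x) + r' P2(x)) / (t + r')` and summing gives `1`. -/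

namespace StmtNS

variable {X : Type*} [Fintype X]

/-- The weighted harmonic mean `(s + u) / (s / a + u / b)` is at most the weighted arithmetic
mean; a vanishing denominator makes the left side `0`. -/
lemma weighted_harm_mean_le_arith_mean {a b s u : ℝ} (ha : 0 ≤ a) (hb : 0 ≤ b)
    (hs : 0 ≤ s) (hu : 0 ≤ u) :
    (s + u) * a * b / (u * a + s * b) ≤ (s * a + u * b) / (s + u) := by
  rcases (add_nonneg (mul_nonneg hu ha) (mul_nonneg hs hb)).eq_or_lt with hden | hden
  · rw [← hden, div_zero]
    positivity
  have hsu : 0 < s + u := by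
    by_contra! h
    obtain ⟨rfl, rfl⟩ : s = 0 ∧ u = 0 := ⟨by linarith, by linarith⟩
    simp at hden
  rw [div_le_div_iff₀ hden hsu]
  nlinarith [mul_nonneg (mul_nonneg hs hu) (sq_nonneg (a - b))]

lemma IsProbDist.mix {P Q : X → ℝ} (hP : IsProbDist P) (hQ : IsProbDist Q) {t : ℝ}
    (ht : t ∈ Set.Icc (0 : ℝ) 1) : IsProbDist fun x => t * P x + (1 - t) * Q x := by
  obtain ⟨ht0, ht1⟩ := ht
  refine ⟨fun x => ?_, ?_⟩
  · have := hP.1 x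
    have := hQ.1 x
    have : 0 ≤ 1 - t := sub_nonneg.2 ht1
    positivity
  · rw [Finset.sum_add_distrib, ← Finset.mul_sum, ← Finset.mul_sum, hP.2, hQ.2]
    ring

lemma IsProbDist.sum_weighted_harm_mean_le_one {P Q : X → ℝ} (hP : IsProbDist P)
    (hQ : IsProbDist Q) {s u : ℝ} (hs : 0 ≤ s) (hu : 0 < u) :
    ∑ x, (s + u) * Q x * P x / (u * Q x + s * P x) ≤ 1 :=
  calc ∑ x, (s + u) * Q x * P x / (u * Q x + s * P x)
      ≤ ∑ x, (s * Q x + u * P x) / (s + u) := Finset.sum_le_sum fun x _ =>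
        weighted_harm_mean_le_arith_mean (hQ.1 x) (hP.1 x) hs hu.le
    _ = 1 := by
      rw [← Finset.sum_div, Finset.sum_add_distrib, ← Finset.mul_sum, ← Finset.mul_sum,
        hP.2, hQ.2, mul_one, mul_one, div_self (by positivity)]

theorem sum_ratio_le_one_general
    (P1 P2 : X → ℝ) (hP1 : IsProbDist P1) (hP2 : IsProbDist P2)
    {r' : ℝ} (hr' : 0 < r') :
    (∀ t ∈ Set.Icc (0 : ℝ) 1,
      ∑ x, (t + r') * (t * P1 x + (1 - t) * P2 x) * P2 x /
          (r' * t * P1 x + (r' - r' * t + t) * P2 x) ≤ 1) ∧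
    ∑ x, ((0 : ℝ) + r') * (0 * P1 x + (1 - 0) * P2 x) * P2 x /
        (r' * 0 * P1 x + (r' - r' * 0 + 0) * P2 x) = 1 := by
  refine ⟨fun t ht => ?_, ?_⟩
  · have hden : ∀ x, r' * t * P1 x + (r' - r' * t + t) * P2 x
        = r' * (t * P1 x + (1 - t) * P2 x) + t * P2 x := fun x => by ring
    simp only [hden]
    exact hP2.sum_weighted_harm_mean_le_one (hP1.mix hP2 ht) ht.1 hr'
  · have hterm : ∀ x, ((0 : ℝ) + r') * (0 * P1 x + (1 - 0) * P2 x) * P2 x /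
        (r' * 0 * P1 x + (r' - r' * 0 + 0) * P2 x) = P2 x := fun x => by
      simp only [zero_add, zero_mul, sub_zero, one_mul, mul_zero, add_zero]
      rw [mul_assoc, mul_div_mul_left _ _ hr'.ne', mul_self_div_self]
    simp only [hterm]
    exact hP2.2

/-- for all `t ∈ [0,1]`,
`∑_x (t+r')·(t·P1(x)+(1−t)·P2(x))·P2(x)/(r'·t·P1(x)+(r'−r'·t+t)·P2(x)) ≤ 1`,
with equality at `t = 0`. -/
theorem sum_ratio_le_one [Nonempty X]
    (P1 P2 : X → ℝ) (hP1 : IsProbDist P1) (hP2 : IsProbDist P2)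
    (hP1pos : ∀ x, 0 < P1 x) (hP2pos : ∀ x, 0 < P2 x)
    {r' : ℝ} (hr' : 0 < r') :
    (∀ t ∈ Set.Icc (0 : ℝ) 1,
      ∑ x, (t + r') * (t * P1 x + (1 - t) * P2 x) * P2 x /
          (r' * t * P1 x + (r' - r' * t + t) * P2 x) ≤ 1) ∧
    ∑ x, ((0 : ℝ) + r') * (0 * P1 x + (1 - 0) * P2 x) * P2 x /
        (r' * 0 * P1 x + (r' - r' * 0 + 0) * P2 x) = 1 :=
  sum_ratio_le_one_general P1 P2 hP1 hP2 hr'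

end StmtNS
end

section
/- Let 𝒳 be a nonempty finite set, let P1, P2 be full-support probability distributions on 𝒳 and let a > 0. Then lim_{t→0⁺} GJS( t·P1 + (1−t)·P2, P2, a ) / t² = ( a / (2·(a+1)) ) · χ₂(P1‖P2), where χ₂(P1‖P2) = ∑_{x∈𝒳} (P1(x)−P2(x))²/P2(x). -/
/-!
Write `M = (a Q + P) / (a + 1)` and `D(R, P) = ∑ P · klFun (R / P)`, with
`klFun x = x log x + 1 - x`. Because the linear terms cancel, `GJS(Q, P, a) = a D(Q, P) - (a + 1) D(M, P)`. Near `x = 1`,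
`klFun x ~ (x - 1)² / 2`, and for `Q = P + t (P1 - P)` we have `M = P + t a/(a+1) (P1 - P)`, so
`GJS / t²` tends to `(a - (a + 1) (a/(a+1))²) / 2 · χ₂ = a / (2 (a + 1)) · χ₂`.
-/

namespace StmtNS

variable {X : Type*} [Fintype X]

/-- Chi-square distance `χ₂(P1‖P2) = ∑_x (P1(x)−P2(x))²/P2(x)`. -/
noncomputable def chiSq (P1 P2 : X → ℝ) : ℝ := ∑ x, (P1 x - P2 x) ^ 2 / P2 x

open Filter Set Topology Real InformationTheory

lemma mul_log_div_add_mul_log_div_eq_klFun {a p q : ℝ} (ha : 0 ≤ a) (hp : 0 < p)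
    (hq : 0 ≤ q) :
    a * (q * log (q / ((a * q + p) / (a + 1)))) + p * log (p / ((a * q + p) / (a + 1))) =
      a * (p * klFun (q / p)) - (a + 1) * (p * klFun ((a * q + p) / (a + 1) / p)) := by
  set m := (a * q + p) / (a + 1) with hm
  have hm_pos : 0 < m := by positivity
  have hmdef : (a + 1) * m = a * q + p := by rw [hm]; field_simp
  have mul_log_div (x : ℝ) {y : ℝ} (hy : y ≠ 0) :
      x * log (x / y) = x * log x - x * log y := by
    rcases eq_or_ne x 0 with rfl | hx
    · simp
    · rw [log_div hx hy, mul_sub]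
  have p_mul_klFun (x : ℝ) : p * klFun (x / p) = x * log (x / p) + p - x := by
    rw [klFun_apply]; field_simp
  rw [p_mul_klFun, p_mul_klFun, mul_log_div q hm_pos.ne', mul_log_div p hm_pos.ne',
    mul_log_div q hp.ne', mul_log_div m hp.ne']
  linear_combination (log m - 1 - log p) * hmdef

lemma GJS_eq_sum_klFun {Q Qt : X → ℝ} {a : ℝ} (ha : 0 ≤ a) (hQ : ∀ x, 0 ≤ Q x)
    (hQt : ∀ x, 0 < Qt x) :
    GJS Q Qt a = ∑ x, (a * (Qt x * klFun (Q x / Qt x)) -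
      (a + 1) * (Qt x * klFun ((a * Q x + Qt x) / (a + 1) / Qt x))) := by
  rw [GJS, KL, KL, Finset.mul_sum, ← Finset.sum_add_distrib]
  refine Finset.sum_congr rfl fun x _ => ?_
  rw [← mul_log_div_add_mul_log_div_eq_klFun ha (hQt x) (hQ x), if_pos (hQt x)]
  rcases (hQ x).eq_or_lt with h | h
  · simp [← h]
  · rw [if_pos h]

lemma tendsto_klFun_one_add_mul_div_sq (e : ℝ) :
    Tendsto (fun t => klFun (1 + t * e) / t ^ 2) (𝓝[≠] 0) (𝓝 (e ^ 2 / 2)) := by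
  have hline (t : ℝ) : HasDerivAt (fun t => 1 + t * e) e t := by
    simpa using ((hasDerivAt_id t).mul_const e).const_add 1
  have hpos : ∀ᶠ t in 𝓝[≠] (0 : ℝ), 0 < 1 + t * e :=
    nhdsWithin_le_nhds <| (Continuous.tendsto (by fun_prop) 0).eventually_const_lt (by simp)
  have hslope : Tendsto (fun t => log (1 + t * e) / t) (𝓝[≠] 0) (𝓝 e) := by
    simpa [div_eq_inv_mul] using ((hline 0).log (by simp)).tendsto_slope_zero
  refine HasDerivAt.lhopital_zero_nhdsNE (f' := fun t => log (1 + t * e) * e)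
    (g' := fun t => 2 * t) ?_ ?_ ?_ ?_ ?_ ?_
  · filter_upwards [hpos] with t ht
    exact (hasDerivAt_klFun ht.ne').comp t (hline t)
  · filter_upwards with t
    simpa using hasDerivAt_pow 2 t
  · filter_upwards [self_mem_nhdsWithin] with t (ht : t ≠ 0)
    positivity
  · have h := (Continuous.tendsto (by fun_prop : Continuous fun t : ℝ => klFun (1 + t * e)) 0)
    simpa [klFun_one] using h.mono_left nhdsWithin_le_nhds
  · have h := (Continuous.tendsto (continuous_pow 2 : Continuous fun t : ℝ => t ^ 2) 0)
    simpa using h.mono_left nhdsWithin_le_nhds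
  · have h := (hslope.mul_const e).div_const 2
    rw [sq]
    exact h.congr fun t => by ring

lemma tendsto_gjs_klFun_terms_div_sq {a p : ℝ} (ha : a + 1 ≠ 0) (hp : p ≠ 0) (r : ℝ) :
    Tendsto (fun t => (a * (p * klFun ((t * r + (1 - t) * p) / p)) -
        (a + 1) * (p * klFun ((a * (t * r + (1 - t) * p) + p) / (a + 1) / p))) / t ^ 2)
      (𝓝[≠] 0) (𝓝 (a / (2 * (a + 1)) * ((r - p) ^ 2 / p))) := by
  have h := ((tendsto_klFun_one_add_mul_div_sq ((r - p) / p)).const_mul (a * p)).sub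
    ((tendsto_klFun_one_add_mul_div_sq (a / (a + 1) * ((r - p) / p))).const_mul ((a + 1) * p))
  convert h using 2 with t
  · have hq : (t * r + (1 - t) * p) / p = 1 + t * ((r - p) / p) := by field_simp; ring
    have hm : (a * (t * r + (1 - t) * p) + p) / (a + 1) / p =
        1 + t * (a / (a + 1) * ((r - p) / p)) := by field_simp; ring
    rw [hq, hm]
    ring
  · field_simp
    ring

theorem gjs_mix_chiSq_limit_general
    (P1 P2 : X → ℝ)
    (hP2pos : ∀ x, 0 < P2 x)
    {a : ℝ} (ha : 0 < a) :
    Filter.Tendsto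
      (fun t : ℝ => GJS (fun x => t * P1 x + (1 - t) * P2 x) P2 a / t ^ 2)
      (nhdsWithin 0 (Set.Ioi 0))
      (nhds (a / (2 * (a + 1)) * chiSq P1 P2)) := by
  have hmix_pos : ∀ᶠ t in 𝓝[>] (0 : ℝ), ∀ x, 0 ≤ t * P1 x + (1 - t) * P2 x :=
    nhdsWithin_le_nhds <| eventually_all.2 fun x =>
      ((Continuous.tendsto (by fun_prop) 0).eventually_const_lt (by simpa using hP2pos x)).mono
        fun _ ht => ht.le
  have hterms := tendsto_finsetSum Finset.univ fun x _ =>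
    (tendsto_gjs_klFun_terms_div_sq (by linarith) (hP2pos x).ne' (P1 x)).mono_left
      (nhdsGT_le_nhdsNE 0)
  rw [chiSq, Finset.mul_sum]
  refine hterms.congr' ?_
  filter_upwards [hmix_pos] with t ht
  rw [GJS_eq_sum_klFun ha.le ht hP2pos, Finset.sum_div]

/-- `lim_{t→0⁺} GJS(t·P1+(1−t)·P2, P2, a)/t² = (a/(2(a+1)))·χ₂(P1‖P2)`. -/
theorem gjs_mix_chiSq_limit [Nonempty X]
    (P1 P2 : X → ℝ) (hP1 : IsProbDist P1) (hP2 : IsProbDist P2)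
    (hP1pos : ∀ x, 0 < P1 x) (hP2pos : ∀ x, 0 < P2 x)
    {a : ℝ} (ha : 0 < a) :
    Filter.Tendsto
      (fun t : ℝ => GJS (fun x => t * P1 x + (1 - t) * P2 x) P2 a / t ^ 2)
      (nhdsWithin 0 (Set.Ioi 0))
      (nhds (a / (2 * (a + 1)) * chiSq P1 P2)) :=
  gjs_mix_chiSq_limit_general P1 P2 hP2pos ha

end StmtNS
end
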